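/- arXiv:1503.08859 — 4 statements merged into one kernel-verified Lean document; each statement's English description precedes it below -/
import Mathlib

section
/- Let T : ℝ>0 × V → ℝ be smooth in (ρ, u), where V = ℝⁿ. If ρ ∂_ρ(∂T/∂u^k)(ρ,u) = (∂T/∂u^k)(ρ,u) for all k, all ρ > 0 and all u, then there exist smooth functions A : V → ℝ and B : ℝ>0 → ℝ such that T(ρ,u) = ρ·A(u) + B(ρ). -/
/-- A real function with zero derivative on `Ioi 0` is constant there. -/
lemma aux_const_Ioi {φ : ℝ → ℝ} (hφ : ∀ x ∈ Set.Ioi (0:ℝ), HasDerivAt φ 0 x)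
    {a b : ℝ} (ha : a ∈ Set.Ioi (0:ℝ)) (hb : b ∈ Set.Ioi (0:ℝ)) : φ a = φ b := by
  refine (convex_Ioi (0:ℝ)).is_const_of_fderivWithin_eq_zero
    (fun x hx => (hφ x hx).differentiableAt.differentiableWithinAt)
    (fun x hx => ?_) ha hb
  rw [fderivWithin_of_isOpen isOpen_Ioi hx, (hφ x hx).hasFDerivAt.fderiv]
  ext
  simp

/-- Integration of `ρ T_{u^k ρ} = T_{u^k}`: the conserved density splits as
`T(ρ,u) = ρ A(u) + B(ρ)`. -/
theorem stmt1 (n : ℕ)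
    (T : ℝ → (Fin n → ℝ) → ℝ)
    (hT : ContDiffOn ℝ (⊤ : ℕ∞) (fun p : ℝ × (Fin n → ℝ) => T p.1 p.2)
      (Set.Ioi 0 ×ˢ Set.univ))
    (heq : ∀ ρ : ℝ, 0 < ρ → ∀ u : Fin n → ℝ, ∀ k : Fin n,
      ρ * deriv (fun r => fderiv ℝ (T r) u (Pi.single k 1)) ρ
        = fderiv ℝ (T ρ) u (Pi.single k 1)) :
    ∃ (A : (Fin n → ℝ) → ℝ) (B : ℝ → ℝ),
      ContDiff ℝ (⊤ : ℕ∞) A ∧ ContDiffOn ℝ (⊤ : ℕ∞) B (Set.Ioi 0) ∧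
      ∀ ρ : ℝ, 0 < ρ → ∀ u : Fin n → ℝ, T ρ u = ρ * A u + B ρ := by
  set S : Set (ℝ × (Fin n → ℝ)) := Set.Ioi 0 ×ˢ Set.univ with hSdef
  have hS : IsOpen S := isOpen_Ioi.prod isOpen_univ
  set f : ℝ × (Fin n → ℝ) → ℝ := fun p => T p.1 p.2 with hfdef
  have hT' : ContDiffOn ℝ (⊤ : ℕ∞) f S := hT
  have hmem : ∀ {ρ : ℝ}, 0 < ρ → ∀ (u : Fin n → ℝ), (ρ, u) ∈ S := fun hρ u => ⟨hρ, trivial⟩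
  -- differentiability of f at points of S
  have hfd : ∀ p ∈ S, DifferentiableAt ℝ f p := fun p hp =>
    (hT'.contDiffAt (hS.mem_nhds hp)).differentiableAt (by simp)
  -- derivative of the slice u ↦ T ρ u
  have hslice : ∀ {ρ : ℝ}, 0 < ρ → ∀ (u : Fin n → ℝ),
      HasFDerivAt (T ρ) ((fderiv ℝ f (ρ, u)).comp (ContinuousLinearMap.inr ℝ ℝ (Fin n → ℝ))) u := by
    intro ρ hρ u
    have h1 : HasFDerivAt (fun v : Fin n → ℝ => ((ρ : ℝ), v)) (ContinuousLinearMap.inr ℝ ℝ (Fin n → ℝ)) u :=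
      (hasFDerivAt_const ρ u).prodMk (hasFDerivAt_id u)
    exact ((hfd _ (hmem hρ u)).hasFDerivAt).comp u h1
  have hfold : ∀ {ρ : ℝ}, 0 < ρ → ∀ (u : Fin n → ℝ) (k : Fin n),
      fderiv ℝ (T ρ) u (Pi.single k 1) = fderiv ℝ f (ρ, u) (0, Pi.single k 1) := by
    intro ρ hρ u k
    rw [(hslice hρ u).fderiv]
    rfl
  -- the fderiv of f is smooth, hence differentiable, on S
  have hf' : ContDiffOn ℝ (⊤ : ℕ∞) (fderiv ℝ f) S := hT'.fderiv_of_isOpen hS (by simp)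
  -- key ODE step: the u-partials are linear in ρ
  have hkey : ∀ {ρ : ℝ}, 0 < ρ → ∀ (u : Fin n → ℝ) (k : Fin n),
      fderiv ℝ (T ρ) u (Pi.single k 1) = ρ * fderiv ℝ (T 1) u (Pi.single k 1) := by
    intro ρ hρ u k
    set φ : ℝ → ℝ := fun r => fderiv ℝ f (r, u) (0, Pi.single k 1) with hφdef
    have hφd : ∀ r : ℝ, 0 < r → DifferentiableAt ℝ φ r := by
      intro r hr
      have h1 : DifferentiableAt ℝ (fun r : ℝ => fderiv ℝ f (r, u)) r := by
        have h2 : DifferentiableAt ℝ (fderiv ℝ f) (r, u) :=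
          ((hf'.differentiableOn (by simp)) (r, u) (hmem hr u)).differentiableAt
            (hS.mem_nhds (hmem hr u))
        exact h2.comp r ((differentiableAt_id).prodMk (differentiableAt_const u))
      exact h1.clm_apply (differentiableAt_const _)
    -- the function in heq agrees with φ near any ρ > 0
    have hEq : ∀ r : ℝ, 0 < r →
        deriv (fun s => fderiv ℝ (T s) u (Pi.single k 1)) r = deriv φ r := by
      intro r hr
      apply Filter.EventuallyEq.deriv_eq
      filter_upwards [Ioi_mem_nhds hr] with s hs
      exact hfold hs u k
    have hode : ∀ r : ℝ, 0 < r → r * deriv φ r = φ r := by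
      intro r hr
      have := heq r hr u k
      rw [hEq r hr] at this
      rw [this, hfold hr u k]
    -- ψ = φ r / r is constant on Ioi 0
    have hψ : ∀ r ∈ Set.Ioi (0:ℝ), HasDerivAt (fun s => φ s * s⁻¹) 0 r := by
      intro r hr
      have hr' : (r : ℝ) ≠ 0 := ne_of_gt hr
      have h1 : HasDerivAt φ (deriv φ r) r := (hφd r hr).hasDerivAt
      have h2 : HasDerivAt (fun s : ℝ => s⁻¹) (-(r ^ 2)⁻¹) r := hasDerivAt_inv hr'
      have h3 := h1.mul h2
      refine h3.congr_deriv ?_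
      have h4 : deriv φ r = φ r / r := by
        field_simp
        rw [mul_comm]
        exact hode r hr
      rw [h4]
      field_simp
      ring
    have hconst : φ ρ * ρ⁻¹ = φ 1 * 1⁻¹ :=
      aux_const_Ioi hψ hρ (by norm_num)
    have : φ ρ = ρ * φ 1 := by
      have hρ' : (ρ : ℝ) ≠ 0 := ne_of_gt hρ
      field_simp at hconst
      rw [hconst]
    rw [hfold hρ u k, hfold one_pos u k]
    exact this
  -- the function u ↦ T ρ u - ρ * T 1 u is constant
  have hTdiff : ∀ {ρ : ℝ}, 0 < ρ → Differentiable ℝ (T ρ) := by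
    intro ρ hρ u
    exact (hslice hρ u).differentiableAt
  have hconstu : ∀ {ρ : ℝ}, 0 < ρ → ∀ (u : Fin n → ℝ),
      T ρ u - ρ * T 1 u = T ρ 0 - ρ * T 1 0 := by
    intro ρ hρ u
    set F : (Fin n → ℝ) → ℝ := fun v => T ρ v - ρ * T 1 v with hFdef
    have hFd : Differentiable ℝ F :=
      (hTdiff hρ).sub ((hTdiff one_pos).const_mul ρ)
    have hF' : ∀ v : Fin n → ℝ, fderiv ℝ F v = 0 := by
      intro v
      have h1 : fderiv ℝ F v =
          fderiv ℝ (T ρ) v - ρ • fderiv ℝ (T 1) v := by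
        rw [hFdef]
        rw [fderiv_fun_sub (hTdiff hρ v) (((hTdiff one_pos) v).const_mul ρ)]
        congr 1
        rw [fderiv_const_mul ((hTdiff one_pos) v)]
      have hb : ∀ k : Fin n, fderiv ℝ F v (Pi.single k 1) = 0 := by
        intro k
        rw [h1]
        simp only [ContinuousLinearMap.sub_apply, ContinuousLinearMap.smul_apply, smul_eq_mul]
        rw [hkey hρ v k]
        ring
      -- conclude via the standard basis
      apply ContinuousLinearMap.coe_injective
      apply (Pi.basisFun ℝ (Fin n)).ext
      intro k
      simpa using hb k
    exact is_const_of_fderiv_eq_zero hFd hF' u 0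
  refine ⟨fun u => T 1 u - T 1 0, fun ρ => T ρ 0, ?_, ?_, ?_⟩
  · -- smoothness of A
    have h1 : ContDiff ℝ (⊤ : ℕ∞) (fun u : Fin n → ℝ => T 1 u) := by
      rw [contDiff_iff_contDiffAt]
      intro u
      have h2 : ContDiffAt ℝ (⊤ : ℕ∞) f (1, u) := hT'.contDiffAt (hS.mem_nhds (hmem one_pos u))
      exact h2.comp u ((contDiff_const.prodMk contDiff_id).contDiffAt)
    exact h1.sub contDiff_const
  · -- smoothness of B
    have h1 : ContDiffOn ℝ (⊤ : ℕ∞) (fun ρ : ℝ => ((ρ, (0 : Fin n → ℝ)) : ℝ × (Fin n → ℝ))) (Set.Ioi 0) :=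
      (contDiff_id.prodMk contDiff_const).contDiffOn
    exact hT'.comp h1 (fun ρ hρ => hmem hρ 0)
  · intro ρ hρ u
    have := hconstu hρ u
    show T ρ u = ρ * (T 1 u - T 1 0) + T ρ 0
    linarith
end

section
/- Let V be a real vector space of dimension n, let 1 ≤ q < n, and let B be a tensor of type (q,1), i.e. B : V* ⊗ ⋀^q V (components B_l^{j₁⋯j_q}, antisymmetric in upper indices). Suppose B satisfies (q−1) δ_{[l}^{[j₁} B_{m]}^{|j|⋯j_{q−1}]k} + 2 B_{[m}^{j₁⋯j_{q−1}[j} δ_{l]}^{k]} = 0 for all indices. Then contracting this identity with δ_k^m yields (n−1−q) B_l^{j₁⋯j_{q−1}k} = 0; in particular, if q ≠ n−1 then B = 0. -/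
open Equiv

/-- The `B`-tensor upper-index tuple `(j, j₂, …, j_{q−1}, k)` occurring in the
first term of the determining identity. -/
def tuple1 (n q : ℕ) (j k : Fin n) (K : Fin (q - 1) → Fin n) : Fin q → Fin n :=
  fun i => if _ : (i : ℕ) = 0 then j
    else if _ : (i : ℕ) = q - 1 then k
    else K ⟨(i : ℕ), by have := i.isLt; omega⟩

/-- The `B`-tensor upper-index tuple `(j₁, …, j_{q−1}, j)` occurring in the
second term of the determining identity. -/
def tuple2 (n q : ℕ) (j : Fin n) (K : Fin (q - 1) → Fin n) : Fin q → Fin n :=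
  fun i => if h : (i : ℕ) < q - 1 then K ⟨(i : ℕ), h⟩ else j

/-- Un-antisymmetrized first term `δ_l^{j₁} B_m^{j j₂⋯j_{q−1} k}`. -/
def term1 (n q : ℕ) (B : Fin n → (Fin q → Fin n) → ℝ)
    (l m j k : Fin n) (K : Fin (q - 1) → Fin n) : ℝ :=
  if h : 0 < q - 1 then
    (if K ⟨0, h⟩ = l then (1:ℝ) else 0) * B m (tuple1 n q j k K)
  else 0

/-- Un-antisymmetrized second term `B_m^{j₁⋯j_{q−1} j} δ_l^k`. -/
def term2 (n q : ℕ) (B : Fin n → (Fin q → Fin n) → ℝ)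
    (l m j k : Fin n) (K : Fin (q - 1) → Fin n) : ℝ :=
  B m (tuple2 n q j K) * (if l = k then (1:ℝ) else 0)

namespace Stmt9Aux

def emb (q : ℕ) : Fin (q - 1) ≃ {i : Fin q // (i : ℕ) < q - 1} where
  toFun a := ⟨⟨(a : ℕ), by have := a.isLt; omega⟩, a.isLt⟩
  invFun b := ⟨(b.1 : ℕ), b.2⟩
  left_inv a := rfl
  right_inv b := rfl

def permExt (q : ℕ) (σ : Perm (Fin (q - 1))) : Perm (Fin q) := σ.extendDomain (emb q)

lemma sign_permExt (q : ℕ) (σ : Perm (Fin (q - 1))) :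
    Perm.sign (permExt q σ) = Perm.sign σ := Perm.sign_extendDomain σ (emb q)

lemma tuple2_comp (n q : ℕ) (j : Fin n) (K : Fin (q - 1) → Fin n) (σ : Perm (Fin (q - 1))) :
    tuple2 n q j (K ∘ σ) = tuple2 n q j K ∘ (permExt q σ) := by
  funext i
  by_cases h : (i : ℕ) < q - 1
  · have h1 : (permExt q σ) i = ((emb q) (σ ((emb q).symm ⟨i, h⟩)) : Fin q) :=
      Perm.extendDomain_apply_subtype σ (emb q) h
    have h2 : ((((emb q) (σ ((emb q).symm ⟨i, h⟩)) : Fin q)) : ℕ) = ((σ ((emb q).symm ⟨i, h⟩) : Fin (q-1)) : ℕ) := rfl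
    simp only [tuple2, Function.comp_apply, h, dif_pos, h1, h2]
    rw [dif_pos (σ ((emb q).symm ⟨i, h⟩)).isLt]
    exact congrArg K (Fin.ext rfl)
  · have h1 : (permExt q σ) i = i := Perm.extendDomain_apply_not_subtype σ (emb q) h
    simp only [tuple2, Function.comp_apply, h1, h, dif_neg, not_false_iff]

lemma tuple2_swap (n q : ℕ) (hq : 0 < q - 1) (j : Fin n) (K : Fin (q - 1) → Fin n) :
    tuple2 n q j K ∘ (swap (⟨0, by omega⟩ : Fin q) ⟨q - 1, by omega⟩) =
      tuple1 n q j (K ⟨0, hq⟩) K := by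
  have hne : q - 1 ≠ 0 := by omega
  funext i
  rcases eq_or_ne i (⟨0, by omega⟩ : Fin q) with h0 | h0
  · rw [h0, Function.comp_apply, Equiv.swap_apply_left]
    simp [tuple2, tuple1, hne]
  · rcases eq_or_ne i (⟨q - 1, by omega⟩ : Fin q) with h1 | h1
    · rw [h1, Function.comp_apply, Equiv.swap_apply_right]
      simp [tuple2, tuple1, hne, hq]
    · rw [Function.comp_apply, Equiv.swap_apply_of_ne_of_ne h0 h1]
      have hi0 : (i : ℕ) ≠ 0 := fun h => h0 (Fin.ext h)
      have hi1 : (i : ℕ) ≠ q - 1 := fun h => h1 (Fin.ext h)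
      have hilt : (i : ℕ) < q - 1 := by have := i.isLt; omega
      simp only [tuple2, tuple1]
      rw [dif_pos hilt, dif_neg hi0, dif_neg hi1]

lemma tuple2_self (n q : ℕ) (hq : 1 ≤ q) (J : Fin q → Fin n) :
    tuple2 n q (J ⟨q - 1, by omega⟩) (fun i => J ⟨(i : ℕ), by have := i.isLt; omega⟩) = J := by
  funext i
  by_cases h : (i : ℕ) < q - 1
  · simp only [tuple2, dif_pos h]
  · simp only [tuple2, dif_neg h]
    congr 1
    ext
    have := i.isLt; simp; omega

def upd (n q : ℕ) (K' : Fin (q - 1) → Fin n) (j : Fin n) : Fin (q - 1) → Fin n :=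
  fun i => if (i : ℕ) = 0 then j else K' i

lemma tuple1_as_tuple2 (n q : ℕ) (hq : 0 < q - 1) (j m : Fin n) (K' : Fin (q - 1) → Fin n) :
    tuple1 n q j m K' = tuple2 n q m (upd n q K' j) := by
  funext i
  by_cases h : (i : ℕ) < q - 1
  · simp only [tuple2, dif_pos h, upd, tuple1]
    by_cases h0 : (i : ℕ) = 0
    · rw [dif_pos h0, if_pos h0]
    · rw [dif_neg h0, if_neg h0, dif_neg (by omega)]
  · have hi : (i : ℕ) = q - 1 := by have := i.isLt; omega
    simp only [tuple2, dif_neg h, tuple1]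
    rw [dif_neg (by omega), dif_pos hi]

lemma upd_eq_self (n q : ℕ) (hq : 0 < q - 1) (K' : Fin (q - 1) → Fin n) :
    upd n q K' (K' ⟨0, hq⟩) = K' := by
  funext i
  by_cases h : (i : ℕ) = 0
  · simp only [upd, if_pos h]
    congr 1
    exact (Fin.ext h.symm)
  · simp only [upd, if_neg h]

/-- The contraction `∑_m B_m^{j₁…j_{q-1} m}` of the last upper index with the lower index. -/
def Dtr (n q : ℕ) (B : Fin n → (Fin q → Fin n) → ℝ) (K : Fin (q - 1) → Fin n) : ℝ :=
  ∑ m : Fin n, B m (tuple2 n q m K)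

variable {n q : ℕ} {B : Fin n → (Fin q → Fin n) → ℝ}

lemma B_comp_sign (hanti : ∀ (l : Fin n) (J : Fin q → Fin n) (σ : Perm (Fin q)),
      B l (J ∘ σ) = ((Perm.sign σ : ℤ) : ℝ) * B l J)
    (l j : Fin n) (K : Fin (q - 1) → Fin n) (σ : Perm (Fin (q - 1))) :
    B l (tuple2 n q j (K ∘ σ)) = ((Perm.sign σ : ℤ) : ℝ) * B l (tuple2 n q j K) := by
  rw [tuple2_comp, hanti l _ (permExt q σ), sign_permExt]

lemma Dtr_comp (hanti : ∀ (l : Fin n) (J : Fin q → Fin n) (σ : Perm (Fin q)),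
      B l (J ∘ σ) = ((Perm.sign σ : ℤ) : ℝ) * B l J)
    (K : Fin (q - 1) → Fin n) (σ : Perm (Fin (q - 1))) :
    Dtr n q B (K ∘ σ) = ((Perm.sign σ : ℤ) : ℝ) * Dtr n q B K := by
  unfold Dtr
  rw [Finset.mul_sum]
  exact Finset.sum_congr rfl fun m _ => B_comp_sign hanti m m K σ

lemma sum_term1a (l j : Fin n) (K' : Fin (q - 1) → Fin n) :
    ∑ m : Fin n, term1 n q B l m j m K' =
      if h : 0 < q - 1 then
        (if K' ⟨0, h⟩ = l then (1:ℝ) else 0) * Dtr n q B (upd n q K' j) else 0 := by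
  by_cases h : 0 < q - 1
  · rw [dif_pos h]
    simp only [term1, dif_pos h]
    rw [← Finset.mul_sum]
    congr 1
    exact Finset.sum_congr rfl fun m _ => by rw [tuple1_as_tuple2 n q h]
  · simp [term1, h]

lemma sum_term1b (hanti : ∀ (l : Fin n) (J : Fin q → Fin n) (σ : Perm (Fin q)),
      B l (J ∘ σ) = ((Perm.sign σ : ℤ) : ℝ) * B l J)
    (hq1 : 1 ≤ q) (l j : Fin n) (K' : Fin (q - 1) → Fin n) :
    ∑ m : Fin n, term1 n q B m l j m K' =
      if _ : 0 < q - 1 then -(B l (tuple2 n q j K')) else 0 := by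
  by_cases h : 0 < q - 1
  · rw [dif_pos h]
    simp only [term1, dif_pos h]
    rw [Finset.sum_congr rfl (fun m _ => by rw [ite_mul, one_mul, zero_mul])]
    rw [Finset.sum_ite_eq, if_pos (Finset.mem_univ _)]
    have hab : (⟨0, by omega⟩ : Fin q) ≠ ⟨q - 1, by omega⟩ := by
      simp [Fin.ext_iff]; omega
    have hs := hanti l (tuple2 n q j K') (swap (⟨0, by omega⟩ : Fin q) ⟨q - 1, by omega⟩)
    rw [tuple2_swap n q h j K', Perm.sign_swap hab] at hs
    rw [hs]
    push_cast
    ring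
  · simp [term1, h]

lemma sum_term2a (l j : Fin n) (K : Fin (q - 1) → Fin n) :
    ∑ m : Fin n, term2 n q B l m j m K = B l (tuple2 n q j K) := by
  simp only [term2, mul_ite, mul_one, mul_zero]
  rw [Finset.sum_ite_eq, if_pos (Finset.mem_univ _)]

lemma sum_term2b (l j : Fin n) (K : Fin (q - 1) → Fin n) :
    ∑ m : Fin n, term2 n q B m l j m K = (n : ℝ) * B l (tuple2 n q j K) := by
  simp [term2, Finset.sum_const, Finset.card_univ]

lemma sum_term2c (l j : Fin n) (K : Fin (q - 1) → Fin n) :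
    ∑ m : Fin n, term2 n q B l m m j K =
      (if l = j then (1:ℝ) else 0) * Dtr n q B K := by
  simp only [term2]
  rw [← Finset.sum_mul, mul_comm]
  rfl

lemma sum_term2d (l j : Fin n) (K : Fin (q - 1) → Fin n) :
    ∑ m : Fin n, term2 n q B m l m j K = B l (tuple2 n q j K) := by
  simp only [term2, mul_ite, mul_one, mul_zero]
  rw [Finset.sum_ite_eq', if_pos (Finset.mem_univ _)]


lemma contractedId (hq1 : 1 ≤ q)
    (hanti : ∀ (l : Fin n) (J : Fin q → Fin n) (σ : Perm (Fin q)),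
      B l (J ∘ σ) = ((Perm.sign σ : ℤ) : ℝ) * B l J)
    (heq : ∀ (l m j k : Fin n) (K : Fin (q - 1) → Fin n),
      ((q : ℝ) - 1) * ((1 / 2) * ((Nat.factorial (q - 1) : ℝ))⁻¹ *
        ∑ σ : Perm (Fin (q - 1)), ((Perm.sign σ : ℤ) : ℝ) *
          (term1 n q B l m j k (K ∘ σ) - term1 n q B m l j k (K ∘ σ)))
      + 2 * ((1 / 4) *
          (term2 n q B l m j k K - term2 n q B m l j k K
            - term2 n q B l m k j K + term2 n q B m l k j K)) = 0)
    (l j : Fin n) (K : Fin (q - 1) → Fin n) :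
    ((q : ℝ) - 1) * ((1 / 2) * ((Nat.factorial (q - 1) : ℝ))⁻¹ *
      ((∑ σ : Perm (Fin (q - 1)), ((Perm.sign σ : ℤ) : ℝ) *
          (if h : 0 < q - 1 then
            (if K (σ ⟨0, h⟩) = l then (1:ℝ) else 0) * Dtr n q B (upd n q (K ∘ σ) j)
          else 0))
        + (Nat.factorial (q - 1) : ℝ) * B l (tuple2 n q j K)))
    + (1 / 2) * ((2 - (n : ℝ)) * B l (tuple2 n q j K)
        - (if l = j then (1:ℝ) else 0) * Dtr n q B K) = 0 := by
  have h0 : ∑ m : Fin n, (((q : ℝ) - 1) * ((1 / 2) * ((Nat.factorial (q - 1) : ℝ))⁻¹ *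
        ∑ σ : Perm (Fin (q - 1)), ((Perm.sign σ : ℤ) : ℝ) *
          (term1 n q B l m j m (K ∘ σ) - term1 n q B m l j m (K ∘ σ)))
      + 2 * ((1 / 4) *
          (term2 n q B l m j m K - term2 n q B m l j m K
            - term2 n q B l m m j K + term2 n q B m l m j K))) = 0 := by
    rw [Finset.sum_congr rfl fun m _ => heq l m j m K]
    exact Finset.sum_const_zero
  rw [Finset.sum_add_distrib] at h0
  simp only [← Finset.mul_sum] at h0
  rw [Finset.sum_comm] at h0
  have hS : ∀ σ : Perm (Fin (q - 1)),
      ∑ m : Fin n, ((Perm.sign σ : ℤ) : ℝ) *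
          (term1 n q B l m j m (K ∘ σ) - term1 n q B m l j m (K ∘ σ))
      = ((Perm.sign σ : ℤ) : ℝ) *
          (if h : 0 < q - 1 then
            (if K (σ ⟨0, h⟩) = l then (1:ℝ) else 0) * Dtr n q B (upd n q (K ∘ σ) j)
          else 0)
        + (if _ : 0 < q - 1 then B l (tuple2 n q j K) else 0) := by
    intro σ
    rw [← Finset.mul_sum, Finset.sum_sub_distrib, sum_term1a, sum_term1b hanti hq1]
    by_cases h : 0 < q - 1
    · simp only [dif_pos h]
      rw [B_comp_sign hanti l j K σ]
      have hsgn : ((Perm.sign σ : ℤ) : ℝ) * ((Perm.sign σ : ℤ) : ℝ) = 1 := by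
        rcases Int.units_eq_one_or (Perm.sign σ) with h1 | h1 <;> rw [h1] <;> norm_num
      have hK : (K ∘ σ) ⟨0, h⟩ = K (σ ⟨0, h⟩) := rfl
      rw [hK]
      linear_combination B l (tuple2 n q j K) * hsgn
    · simp [h]
  rw [Finset.sum_congr rfl fun σ _ => hS σ] at h0
  rw [Finset.sum_add_distrib, Finset.sum_const, Finset.card_univ, Fintype.card_perm,
    Fintype.card_fin, nsmul_eq_mul] at h0
  have hG : ∑ m : Fin n, (term2 n q B l m j m K - term2 n q B m l j m K
      - term2 n q B l m m j K + term2 n q B m l m j K)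
      = B l (tuple2 n q j K) - (n : ℝ) * B l (tuple2 n q j K)
        - (if l = j then (1:ℝ) else 0) * Dtr n q B K + B l (tuple2 n q j K) := by
    rw [Finset.sum_add_distrib, Finset.sum_sub_distrib, Finset.sum_sub_distrib,
      sum_term2a, sum_term2b, sum_term2c, sum_term2d]
  rw [hG] at h0
  by_cases h : 0 < q - 1
  · rw [dif_pos h] at h0
    linear_combination h0
  · have hq' : q = 1 := by omega
    subst hq'
    norm_num at h0 ⊢
    linear_combination h0

lemma Dtr_eq_zero (hq1 : 1 ≤ q) (hqn : q < n)
    (hanti : ∀ (l : Fin n) (J : Fin q → Fin n) (σ : Perm (Fin q)),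
      B l (J ∘ σ) = ((Perm.sign σ : ℤ) : ℝ) * B l J)
    (heq : ∀ (l m j k : Fin n) (K : Fin (q - 1) → Fin n),
      ((q : ℝ) - 1) * ((1 / 2) * ((Nat.factorial (q - 1) : ℝ))⁻¹ *
        ∑ σ : Perm (Fin (q - 1)), ((Perm.sign σ : ℤ) : ℝ) *
          (term1 n q B l m j k (K ∘ σ) - term1 n q B m l j k (K ∘ σ)))
      + 2 * ((1 / 4) *
          (term2 n q B l m j k K - term2 n q B m l j k K
            - term2 n q B l m k j K + term2 n q B m l k j K)) = 0)
    (K : Fin (q - 1) → Fin n) : Dtr n q B K = 0 := by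
  have hfac : ((Nat.factorial (q - 1) : ℝ)) ≠ 0 :=
    Nat.cast_ne_zero.2 (Nat.factorial_ne_zero _)
  have hFF : ((Nat.factorial (q - 1) : ℝ))⁻¹ * (Nat.factorial (q - 1) : ℝ) = 1 :=
    inv_mul_cancel₀ hfac
  have h1 : ∑ jj : Fin n, (((q : ℝ) - 1) * ((1 / 2) * ((Nat.factorial (q - 1) : ℝ))⁻¹ *
      ((∑ σ : Perm (Fin (q - 1)), ((Perm.sign σ : ℤ) : ℝ) *
          (if h : 0 < q - 1 then
            (if K (σ ⟨0, h⟩) = jj then (1:ℝ) else 0) * Dtr n q B (upd n q (K ∘ σ) jj)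
          else 0))
        + (Nat.factorial (q - 1) : ℝ) * B jj (tuple2 n q jj K)))
    + (1 / 2) * ((2 - (n : ℝ)) * B jj (tuple2 n q jj K)
        - (if jj = jj then (1:ℝ) else 0) * Dtr n q B K)) = 0 := by
    rw [Finset.sum_congr rfl fun jj _ => contractedId hq1 hanti heq jj jj K]
    exact Finset.sum_const_zero
  simp only [Finset.sum_add_distrib, Finset.sum_sub_distrib, ← Finset.mul_sum,
    eq_self_iff_true, if_true, one_mul, Finset.sum_const, Finset.card_univ,
    Fintype.card_fin, nsmul_eq_mul] at h1
  have hBD : ∑ jj : Fin n, B jj (tuple2 n q jj K) = Dtr n q B K := rfl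
  rw [hBD] at h1
  have hM : (∑ jj : Fin n, ∑ σ : Perm (Fin (q - 1)), ((Perm.sign σ : ℤ) : ℝ) *
        (if h : 0 < q - 1 then
          (if K (σ ⟨0, h⟩) = jj then (1:ℝ) else 0) * Dtr n q B (upd n q (K ∘ σ) jj)
        else 0))
      = (if _ : 0 < q - 1 then (Nat.factorial (q - 1) : ℝ) * Dtr n q B K else 0) := by
    by_cases h : 0 < q - 1
    · simp only [dif_pos h]
      rw [Finset.sum_comm]
      have inner : ∀ σ : Perm (Fin (q - 1)),
          ∑ jj : Fin n, ((Perm.sign σ : ℤ) : ℝ) *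
            ((if K (σ ⟨0, h⟩) = jj then (1:ℝ) else 0) * Dtr n q B (upd n q (K ∘ σ) jj))
          = Dtr n q B K := by
        intro σ
        rw [← Finset.mul_sum]
        rw [Finset.sum_congr rfl fun jj _ => boole_mul _ _]
        rw [Finset.sum_ite_eq, if_pos (Finset.mem_univ _)]
        have hupd : upd n q (K ∘ σ) (K (σ ⟨0, h⟩)) = K ∘ σ := upd_eq_self n q h (K ∘ σ)
        rw [hupd, Dtr_comp hanti K σ, ← mul_assoc]
        have hsgn : ((Perm.sign σ : ℤ) : ℝ) * ((Perm.sign σ : ℤ) : ℝ) = 1 := by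
          rcases Int.units_eq_one_or (Perm.sign σ) with h1 | h1 <;> rw [h1] <;> norm_num
        rw [hsgn, one_mul]
      rw [Finset.sum_congr rfl fun σ _ => inner σ]
      rw [Finset.sum_const, Finset.card_univ, Fintype.card_perm, Fintype.card_fin,
        nsmul_eq_mul]
    · simp [h]
  rw [hM] at h1
  by_cases h : 0 < q - 1
  · rw [dif_pos h] at h1
    have hqD : ((q : ℝ) - (n : ℝ)) * Dtr n q B K = 0 := by
      linear_combination h1 - ((q : ℝ) - 1) * Dtr n q B K * hFF
    have hne : (q : ℝ) - (n : ℝ) ≠ 0 := by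
      have : (q : ℝ) < (n : ℝ) := by exact_mod_cast hqn
      intro hh; linarith
    exact (mul_eq_zero.mp hqD).resolve_left hne
  · rw [dif_neg h] at h1
    have hq' : q = 1 := by omega
    subst hq'
    have hqD : ((1 : ℝ) - (n : ℝ)) * Dtr n 1 B K = 0 := by
      norm_num at h1
      linear_combination h1 / 2
    have hne : (1 : ℝ) - (n : ℝ) ≠ 0 := by
      have : (1 : ℝ) < (n : ℝ) := by exact_mod_cast hqn
      intro hh; linarith
    exact (mul_eq_zero.mp hqD).resolve_left hne

end Stmt9Aux

/-- The algebraic step in the moving-surface classification: a tensor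
`B_l^{j₁⋯j_q}`, antisymmetric in its upper indices, satisfying
`(q−1) δ_{[l}^{[j₁} B_{m]}^{|j|⋯j_{q−1}]k} + 2 B_{[m}^{j₁⋯j_{q−1}[j} δ_{l]}^{k]} = 0`
must satisfy `(n−1−q) B = 0` (obtained by contracting with `δ_k^m`); in
particular `B = 0` unless `q = n − 1`. -/
theorem stmt9 (n q : ℕ) (hq1 : 1 ≤ q) (hqn : q < n)
    (B : Fin n → (Fin q → Fin n) → ℝ)
    (hanti : ∀ (l : Fin n) (J : Fin q → Fin n) (σ : Perm (Fin q)),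
      B l (J ∘ σ) = ((Perm.sign σ : ℤ) : ℝ) * B l J)
    (heq : ∀ (l m j k : Fin n) (K : Fin (q - 1) → Fin n),
      ((q : ℝ) - 1) * ((1 / 2) * ((Nat.factorial (q - 1) : ℝ))⁻¹ *
        ∑ σ : Perm (Fin (q - 1)), ((Perm.sign σ : ℤ) : ℝ) *
          (term1 n q B l m j k (K ∘ σ) - term1 n q B m l j k (K ∘ σ)))
      + 2 * ((1 / 4) *
          (term2 n q B l m j k K - term2 n q B m l j k K
            - term2 n q B l m k j K + term2 n q B m l k j K)) = 0) :
    (∀ (l : Fin n) (J : Fin q → Fin n), ((n : ℝ) - 1 - (q : ℝ)) * B l J = 0)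
    ∧ (q ≠ n - 1 → ∀ (l : Fin n) (J : Fin q → Fin n), B l J = 0) := by

  classical
  have hfac : ((Nat.factorial (q - 1) : ℝ)) ≠ 0 :=
    Nat.cast_ne_zero.2 (Nat.factorial_ne_zero _)
  have hFF : ((Nat.factorial (q - 1) : ℝ))⁻¹ * (Nat.factorial (q - 1) : ℝ) = 1 :=
    inv_mul_cancel₀ hfac
  have hD : ∀ K : Fin (q - 1) → Fin n, Stmt9Aux.Dtr n q B K = 0 :=
    Stmt9Aux.Dtr_eq_zero hq1 hqn hanti heq
  have main : ∀ (l : Fin n) (J : Fin q → Fin n), ((n : ℝ) - 1 - (q : ℝ)) * B l J = 0 := by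
    intro l J
    have hc := Stmt9Aux.contractedId hq1 hanti heq l (J ⟨q - 1, by omega⟩)
      (fun i => J ⟨(i : ℕ), by have := i.isLt; omega⟩)
    rw [Stmt9Aux.tuple2_self n q hq1 J] at hc
    simp only [hD, mul_zero, dite_eq_ite, ite_self, Finset.sum_const_zero, add_zero,
      zero_add, sub_zero] at hc
    linear_combination (-2 : ℝ) * hc + ((q : ℝ) - 1) * B l J * hFF
  refine ⟨main, fun hne l J => ?_⟩
  have h2 : (n : ℝ) - 1 - (q : ℝ) ≠ 0 := by
    have hlt : q + 1 < n := by omega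
    have : (q : ℝ) + 1 < (n : ℝ) := by exact_mod_cast hlt
    intro hh; linarith
  exact (mul_eq_zero.mp (main l J)).resolve_left h2
end

section
/- Consider the compressible Euler equations on ℝⁿ with equation of state P = P(S) depending only on entropy (isobaric-entropy case), with P' ≠ 0. Then for any smooth f : ℝ → ℝ and any constant vector ζ ∈ ℝⁿ, the density T = ρ ⟨u, ζ⟩ f(S) satisfies the local conservation law ∂_t T + ∇·(ρ⟨u,ζ⟩f(S) u + h(S) ζ) = 0 for all smooth solutions, where h(S) = ∫ f(S) P'(S) dS (i.e. h' = f·P'). -/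
open scoped BigOperators

private lemma alg_aux (n : ℕ) (R F F' Pp : ℝ) (ζ v a c : Fin n → ℝ)
    (b : Fin n → Fin n → ℝ) (hR : R ≠ 0) :
    ((-∑ i, (a i * v i + R * b i i)) * ∑ j, v j * ζ j) * F
      + (R * ∑ i, (-∑ j, v j * b j i - R⁻¹ * Pp * c i) * ζ i) * F
      + (R * ∑ j, v j * ζ j) * (F' * -∑ j, v j * c j)
      + ∑ i, (((a i * ∑ j, v j * ζ j) * F
            + (R * ∑ j, ζ j * b i j) * F
            + (R * ∑ j, v j * ζ j) * (F' * c i)) * v i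
          + (R * ∑ j, v j * ζ j) * F * b i i
          + F * Pp * c i * ζ i) = 0 := by
  have swap : ∑ i, ζ i * ∑ j, v j * b j i = ∑ i, v i * ∑ j, ζ j * b i j := by
    simp only [Finset.mul_sum]
    rw [Finset.sum_comm]
    exact Finset.sum_congr rfl fun i _ => Finset.sum_congr rfl fun j _ => by ring
  have hsp : ∑ i, (((a i * ∑ j, v j * ζ j) * F
            + (R * ∑ j, ζ j * b i j) * F
            + (R * ∑ j, v j * ζ j) * (F' * c i)) * v i
          + (R * ∑ j, v j * ζ j) * F * b i i
          + F * Pp * c i * ζ i)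
      = ∑ i, (((∑ j, v j * ζ j) * F) * (a i * v i)
          + (R * F) * (v i * ∑ j, ζ j * b i j)
          + (R * ((∑ j, v j * ζ j) * F')) * (v i * c i)
          + (R * ((∑ j, v j * ζ j) * F)) * b i i
          + (F * Pp) * (c i * ζ i)) :=
    Finset.sum_congr rfl fun i _ => by ring
  have h2 : (∑ i, (-∑ j, v j * b j i - R⁻¹ * Pp * c i) * ζ i)
      = ∑ i, (-(ζ i * ∑ j, v j * b j i) - (R⁻¹ * Pp) * (c i * ζ i)) :=
    Finset.sum_congr rfl fun i _ => by ring
  rw [hsp, h2]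
  simp only [Finset.sum_add_distrib, Finset.sum_sub_distrib, Finset.sum_neg_distrib,
    ← Finset.mul_sum]
  rw [swap]
  have hc : ∑ j, v j * c j = ∑ i, v i * c i := rfl
  field_simp
  ring

/-- Non-isentropic momentum conservation for the isobaric-entropy equation of
state `P = P(S)` with `P' ≠ 0`: for any smooth `f` and constant vector `ζ`, the
density `T = ρ⟨u,ζ⟩f(S)` satisfies `∂_t T + ∇·(T u + h(S) ζ) = 0`, where
`h' = f · P'`. -/
theorem stmt14 (n : ℕ) (hn : 1 < n)
    (u : ℝ → (Fin n → ℝ) → Fin n → ℝ) (ρ S : ℝ → (Fin n → ℝ) → ℝ)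
    (P f h : ℝ → ℝ) (ζ : Fin n → ℝ)
    (hu : ContDiff ℝ (⊤ : ℕ∞) (fun p : ℝ × (Fin n → ℝ) => u p.1 p.2))
    (hρ : ContDiff ℝ (⊤ : ℕ∞) (fun p : ℝ × (Fin n → ℝ) => ρ p.1 p.2))
    (hS : ContDiff ℝ (⊤ : ℕ∞) (fun p : ℝ × (Fin n → ℝ) => S p.1 p.2))
    (hP : ContDiff ℝ (⊤ : ℕ∞) P) (hf : ContDiff ℝ (⊤ : ℕ∞) f) (hh : ContDiff ℝ (⊤ : ℕ∞) h)
    (hP' : ∀ s : ℝ, deriv P s ≠ 0)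
    (hhf : ∀ s : ℝ, deriv h s = f s * deriv P s)
    (hρpos : ∀ t x, 0 < ρ t x)
    (hmom : ∀ t x i, deriv (fun s => u s x i) t =
      -(∑ j, u t x j * fderiv ℝ (fun y => u t y i) x (Pi.single j 1))
      - (ρ t x)⁻¹ * deriv P (S t x)
          * fderiv ℝ (fun y => S t y) x (Pi.single i 1))
    (hcont : ∀ t x, deriv (fun s => ρ s x) t =
      -∑ j, fderiv ℝ (fun y => ρ t y * u t y j) x (Pi.single j 1))
    (hent : ∀ t x, deriv (fun s => S s x) t =
      -∑ j, u t x j * fderiv ℝ (fun y => S t y) x (Pi.single j 1)) :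
    ∀ t x, deriv (fun s => ρ s x * (∑ j, u s x j * ζ j) * f (S s x)) t
      + ∑ i, fderiv ℝ (fun y =>
          ρ t y * (∑ j, u t y j * ζ j) * f (S t y) * u t y i
            + h (S t y) * ζ i) x (Pi.single i 1)
      = 0 := by
  intro t x
  have hu' : ∀ j, ContDiff ℝ (⊤ : ℕ∞) fun p : ℝ × (Fin n → ℝ) => u p.1 p.2 j :=
    fun j => contDiff_pi.1 hu j
  have dut : ∀ j, Differentiable ℝ fun s => u s x j :=
    fun j => ((hu' j).comp (ContDiff.prodMk contDiff_id contDiff_const)).differentiable (by simp)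
  have dux : ∀ j, Differentiable ℝ fun y => u t y j :=
    fun j => ((hu' j).comp (ContDiff.prodMk contDiff_const contDiff_id)).differentiable (by simp)
  have dρt : Differentiable ℝ fun s => ρ s x :=
    (hρ.comp (ContDiff.prodMk contDiff_id contDiff_const)).differentiable (by simp)
  have dρx : Differentiable ℝ fun y => ρ t y :=
    (hρ.comp (ContDiff.prodMk contDiff_const contDiff_id)).differentiable (by simp)
  have dSt : Differentiable ℝ fun s => S s x :=
    (hS.comp (ContDiff.prodMk contDiff_id contDiff_const)).differentiable (by simp)
  have dSx : Differentiable ℝ fun y => S t y :=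
    (hS.comp (ContDiff.prodMk contDiff_const contDiff_id)).differentiable (by simp)
  have Hρ : HasFDerivAt (fun y => ρ t y) (fderiv ℝ (fun y => ρ t y) x) x :=
    (dρx x).hasFDerivAt
  have HS' : HasFDerivAt (fun y => S t y) (fderiv ℝ (fun y => S t y) x) x :=
    (dSx x).hasFDerivAt
  have Hu : ∀ j, HasFDerivAt (fun y => u t y j) (fderiv ℝ (fun y => u t y j) x) x :=
    fun j => (dux j x).hasFDerivAt
  have HM : HasFDerivAt (fun y => ∑ j, u t y j * ζ j)
      (∑ j, ζ j • fderiv ℝ (fun y => u t y j) x) x :=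
    HasFDerivAt.fun_sum fun j _ => (Hu j).mul_const (ζ j)
  have HF : HasFDerivAt (fun y => f (S t y))
      (deriv f (S t x) • fderiv ℝ (fun y => S t y) x) x :=
    ((hf.differentiable (by simp) (S t x)).hasDerivAt).comp_hasFDerivAt x HS'
  have HH : HasFDerivAt (fun y => h (S t y))
      (deriv h (S t x) • fderiv ℝ (fun y => S t y) x) x :=
    ((hh.differentiable (by simp) (S t x)).hasDerivAt).comp_hasFDerivAt x HS'
  have key : ∀ i, fderiv ℝ (fun y =>
          ρ t y * (∑ j, u t y j * ζ j) * f (S t y) * u t y i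
            + h (S t y) * ζ i) x (Pi.single i 1)
      = (fderiv ℝ (fun y => ρ t y) x (Pi.single i 1) * (∑ j, u t x j * ζ j) * f (S t x)
          + ρ t x * (∑ j, ζ j * fderiv ℝ (fun y => u t y j) x (Pi.single i 1)) * f (S t x)
          + ρ t x * (∑ j, u t x j * ζ j)
              * (deriv f (S t x) * fderiv ℝ (fun y => S t y) x (Pi.single i 1))) * u t x i
        + ρ t x * (∑ j, u t x j * ζ j) * f (S t x)
            * fderiv ℝ (fun y => u t y i) x (Pi.single i 1)
        + deriv h (S t x) * fderiv ℝ (fun y => S t y) x (Pi.single i 1) * ζ i := by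
    intro i
    have Hi := (((Hρ.fun_mul HM).fun_mul HF).fun_mul (Hu i)).fun_add (HH.mul_const (ζ i))
    rw [Hi.fderiv]
    simp only [ContinuousLinearMap.add_apply, ContinuousLinearMap.smul_apply,
      ContinuousLinearMap.coe_sum', Finset.sum_apply, smul_eq_mul]
    ring
  have keyc : ∀ j, fderiv ℝ (fun y => ρ t y * u t y j) x (Pi.single j 1)
      = fderiv ℝ (fun y => ρ t y) x (Pi.single j 1) * u t x j
        + ρ t x * fderiv ℝ (fun y => u t y j) x (Pi.single j 1) := by
    intro j
    rw [(Hρ.fun_mul (Hu j)).fderiv]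
    simp only [ContinuousLinearMap.add_apply, ContinuousLinearMap.smul_apply, smul_eq_mul]
    ring
  have HT : HasDerivAt (fun s => ρ s x * (∑ j, u s x j * ζ j) * f (S s x))
      (deriv (fun s => ρ s x) t * (∑ j, u t x j * ζ j) * f (S t x)
        + ρ t x * (∑ j, deriv (fun s => u s x j) t * ζ j) * f (S t x)
        + ρ t x * (∑ j, u t x j * ζ j)
            * (deriv f (S t x) * deriv (fun s => S s x) t)) t := by
    have h1 : HasDerivAt (fun s => ρ s x) (deriv (fun s => ρ s x) t) t :=
      (dρt t).hasDerivAt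
    have h2 : HasDerivAt (fun s => ∑ j, u s x j * ζ j)
        (∑ j, deriv (fun s => u s x j) t * ζ j) t :=
      HasDerivAt.fun_sum fun j _ => ((dut j) t).hasDerivAt.mul_const (ζ j)
    have h3 : HasDerivAt (fun s => f (S s x))
        (deriv f (S t x) * deriv (fun s => S s x) t) t := by
      have := ((hf.differentiable (by simp) (S t x)).hasDerivAt).comp t (dSt t).hasDerivAt
      exact this
    have := (h1.fun_mul h2).fun_mul h3
    exact this.congr_deriv (by ring)
  rw [HT.deriv]
  simp only [key, keyc, hmom, hcont, hent, hhf]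
  exact alg_aux n (ρ t x) (f (S t x)) (deriv f (S t x)) (deriv P (S t x)) ζ
    (fun j => u t x j) (fun i => fderiv ℝ (fun y => ρ t y) x (Pi.single i 1))
    (fun i => fderiv ℝ (fun y => S t y) x (Pi.single i 1))
    (fun i j => fderiv ℝ (fun y => u t y j) x (Pi.single i 1))
    (ne_of_gt (hρpos t x))
end

section
/- Consider the compressible Euler equations on ℝⁿ with equation of state P = P(S) (isobaric-entropy case). Then for any smooth f : ℝ → ℝ, the density T = ½ ρ |u|² f(S) − h(S), where h'(S) = f(S) P'(S), satisfies ∂_t T + ∇·(T u + h(S) u) = 0 for all smooth solutions. -/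
open scoped BigOperators

lemma alg (n : ℕ) (R Q F F' P' : ℝ) (hR : R ≠ 0) (U dρ dS : Fin n → ℝ)
    (dU : Fin n → Fin n → ℝ) :
    (1/2) * (-∑ i, (R * dU i i + U i * dρ i)) * Q * F
    + (1/2) * R * (∑ j, 2 * U j * (-(∑ k, U k * dU k j) - R⁻¹ * P' * dS j)) * F
    + (1/2) * R * Q * (F' * (-∑ j, U j * dS j))
    - F * P' * (-∑ j, U j * dS j)
    + ∑ i, ((1/2) * (dρ i * Q * F * U i + R * (∑ j, 2 * U j * dU i j) * F * U i
        + R * Q * F' * dS i * U i + R * Q * F * dU i i)) = 0 := by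
  have hRR : R * R⁻¹ = 1 := mul_inv_cancel₀ hR
  simp only [mul_sub, sub_mul, mul_neg, neg_mul, mul_add, add_mul, Finset.mul_sum,
    Finset.sum_mul, Finset.sum_add_distrib, Finset.sum_sub_distrib, Finset.sum_neg_distrib,
    neg_neg, sub_eq_add_neg, neg_add]
  ring_nf
  have e1 : ∑ x : Fin n, ∑ y : Fin n, R * F * U x * U y * dU y x
      = ∑ x : Fin n, ∑ y : Fin n, R * F * U y * dU x y * U x := by
    rw [Finset.sum_comm]
    exact Finset.sum_congr rfl fun i _ => Finset.sum_congr rfl fun j _ => by ring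
  have e2 : ∑ x : Fin n, R * F * U x * R⁻¹ * P' * dS x
      = ∑ x : Fin n, F * P' * U x * dS x :=
    Finset.sum_congr rfl fun i _ => by
      rw [show R * F * U i * R⁻¹ * P' * dS i = R * R⁻¹ * (F * P' * U i * dS i) by ring,
        hRR, one_mul]
  have e3 : ∑ x : Fin n, R * dU x x * Q * F * (1/2)
      = ∑ x : Fin n, R * Q * F * dU x x * (1/2) :=
    Finset.sum_congr rfl fun i _ => by ring
  have e4 : ∑ x : Fin n, Q * F * U x * dρ x * (1/2)
      = ∑ x : Fin n, Q * F * dρ x * U x * (1/2) :=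
    Finset.sum_congr rfl fun i _ => by ring
  have e5 : ∑ x : Fin n, R * Q * F' * U x * dS x * (1/2)
      = ∑ x : Fin n, R * Q * F' * dS x * U x * (1/2) :=
    Finset.sum_congr rfl fun i _ => by ring
  rw [e1, e2, e3, e4, e5]
  ring

/-- Non-isentropic energy conservation for the isobaric-entropy equation of
state `P = P(S)`: for any smooth `f`, the density `T = ½ρ|u|²f(S) − h(S)` with
`h' = f · P'` satisfies `∂_t T + ∇·(T u + h(S) u) = 0` for smooth solutions. -/
theorem stmt15 (n : ℕ) (hn : 1 < n)
    (u : ℝ → (Fin n → ℝ) → Fin n → ℝ) (ρ S : ℝ → (Fin n → ℝ) → ℝ)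
    (P f h : ℝ → ℝ)
    (hu : ContDiff ℝ (⊤ : ℕ∞) (fun p : ℝ × (Fin n → ℝ) => u p.1 p.2))
    (hρ : ContDiff ℝ (⊤ : ℕ∞) (fun p : ℝ × (Fin n → ℝ) => ρ p.1 p.2))
    (hS : ContDiff ℝ (⊤ : ℕ∞) (fun p : ℝ × (Fin n → ℝ) => S p.1 p.2))
    (hP : ContDiff ℝ (⊤ : ℕ∞) P) (hf : ContDiff ℝ (⊤ : ℕ∞) f) (hh : ContDiff ℝ (⊤ : ℕ∞) h)
    (hhf : ∀ s : ℝ, deriv h s = f s * deriv P s)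
    (hρpos : ∀ t x, 0 < ρ t x)
    (hmom : ∀ t x i, deriv (fun s => u s x i) t =
      -(∑ j, u t x j * fderiv ℝ (fun y => u t y i) x (Pi.single j 1))
      - (ρ t x)⁻¹ * deriv P (S t x)
          * fderiv ℝ (fun y => S t y) x (Pi.single i 1))
    (hcont : ∀ t x, deriv (fun s => ρ s x) t =
      -∑ j, fderiv ℝ (fun y => ρ t y * u t y j) x (Pi.single j 1))
    (hent : ∀ t x, deriv (fun s => S s x) t =
      -∑ j, u t x j * fderiv ℝ (fun y => S t y) x (Pi.single j 1)) :
    ∀ t x,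
      deriv (fun s => (1/2) * ρ s x * (∑ j, (u s x j) ^ 2) * f (S s x)
        - h (S s x)) t
      + ∑ i, fderiv ℝ (fun y =>
          ((1/2) * ρ t y * (∑ j, (u t y j) ^ 2) * f (S t y) - h (S t y))
            * u t y i + h (S t y) * u t y i) x (Pi.single i 1)
      = 0 := by
  intro t x
  -- smooth slices
  have hui : ∀ i, ContDiff ℝ (⊤ : ℕ∞) (fun p : ℝ × (Fin n → ℝ) => u p.1 p.2 i) := fun i =>
    (ContinuousLinearMap.proj (R := ℝ) (φ := fun _ : Fin n => ℝ) i).contDiff.comp hu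
  have sliceT : ∀ {F : ℝ → (Fin n → ℝ) → ℝ},
      ContDiff ℝ (⊤ : ℕ∞) (fun p : ℝ × (Fin n → ℝ) => F p.1 p.2) →
      Differentiable ℝ (fun s => F s x) := fun hF =>
    (hF.comp (ContDiff.prodMk contDiff_id contDiff_const)).differentiable (by simp)
  have sliceX : ∀ {F : ℝ → (Fin n → ℝ) → ℝ},
      ContDiff ℝ (⊤ : ℕ∞) (fun p : ℝ × (Fin n → ℝ) => F p.1 p.2) →
      Differentiable ℝ (fun y => F t y) := fun hF =>
    (hF.comp (ContDiff.prodMk contDiff_const contDiff_id)).differentiable (by simp)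
  -- basic HasDerivAt / HasFDerivAt facts
  have hρt : HasDerivAt (fun s => ρ s x) (deriv (fun s => ρ s x) t) t :=
    ((sliceT hρ) t).hasDerivAt
  have hSt : HasDerivAt (fun s => S s x) (deriv (fun s => S s x) t) t :=
    ((sliceT hS) t).hasDerivAt
  have hut : ∀ i, HasDerivAt (fun s => u s x i) (deriv (fun s => u s x i) t) t := fun i =>
    ((sliceT (F := fun a b => u a b i) (hui i)) t).hasDerivAt
  have hρy : HasFDerivAt (fun y => ρ t y) (fderiv ℝ (fun y => ρ t y) x) x :=
    ((sliceX hρ) x).hasFDerivAt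
  have hSy : HasFDerivAt (fun y => S t y) (fderiv ℝ (fun y => S t y) x) x :=
    ((sliceX hS) x).hasFDerivAt
  have huy : ∀ i, HasFDerivAt (fun y => u t y i) (fderiv ℝ (fun y => u t y i) x) x := fun i =>
    ((sliceX (F := fun a b => u a b i) (hui i)) x).hasFDerivAt
  have hdf : HasDerivAt f (deriv f (S t x)) (S t x) :=
    ((hf.differentiable (by simp)) (S t x)).hasDerivAt
  have hdh : HasDerivAt h (deriv h (S t x)) (S t x) :=
    ((hh.differentiable (by simp)) (S t x)).hasDerivAt
  -- abbreviations
  set R := ρ t x with hRdef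
  set F := f (S t x) with hFdef
  set F' := deriv f (S t x) with hF'def
  set P' := deriv P (S t x) with hP'def
  set U : Fin n → ℝ := fun i => u t x i with hUdef
  set Q := ∑ j, U j ^ 2 with hQdef
  set dρ : Fin n → ℝ := fun i => fderiv ℝ (fun y => ρ t y) x (Pi.single i 1) with hdρdef
  set dS : Fin n → ℝ := fun i => fderiv ℝ (fun y => S t y) x (Pi.single i 1) with hdSdef
  set dU : Fin n → Fin n → ℝ :=
    fun i j => fderiv ℝ (fun y => u t y j) x (Pi.single i 1) with hdUdef
  set ρt := deriv (fun s => ρ s x) t with hρtdef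
  set St := deriv (fun s => S s x) t with hStdef
  set ut : Fin n → ℝ := fun i => deriv (fun s => u s x i) t with hutdef
  -- time derivative of kinetic sum
  have hqt : HasDerivAt (fun s => ∑ j, u s x j ^ 2) (∑ j, 2 * U j * ut j) t := by
    refine HasDerivAt.fun_sum fun j _ => ?_
    have := (hut j).fun_mul (hut j)
    have h2 : (fun s => u s x j ^ 2) = fun s => u s x j * u s x j := by
      funext s; ring
    rw [h2]
    convert this using 1
    show 2 * u t x j * deriv (fun s => u s x j) t = _; ring
    rfl
  have hfS : HasDerivAt (fun s => f (S s x)) (F' * St) t := hdf.comp t hSt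
  have hhS : HasDerivAt (fun s => h (S s x)) (deriv h (S t x) * St) t := hdh.comp t hSt
  -- full time derivative
  have hT : HasDerivAt
      (fun s => (1/2) * ρ s x * (∑ j, (u s x j) ^ 2) * f (S s x) - h (S s x))
      ((1/2) * ρt * Q * F + (1/2) * R * (∑ j, 2 * U j * ut j) * F
        + (1/2) * R * Q * (F' * St) - deriv h (S t x) * St) t := by
    have := ((((hasDerivAt_const t ((1:ℝ)/2)).fun_mul hρt).fun_mul hqt).fun_mul hfS).sub hhS
    convert this using 1
    show 1/2 * ρt * (∑ j, u t x j ^ 2) * f (S t x) + (1/2 * ρ t x * ∑ j, 2 * U j * ut j) * f (S t x)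
      + 1/2 * ρ t x * (∑ j, u t x j ^ 2) * (F' * St) - deriv h (S t x) * St = _
    ring
    all_goals rfl
  -- spatial derivative of each flux component
  have hfSy : HasFDerivAt (fun y => f (S t y)) (F' • fderiv ℝ (fun y => S t y) x) x :=
    hdf.comp_hasFDerivAt x hSy
  have hqy : HasFDerivAt (fun y => ∑ j, u t y j ^ 2)
      (∑ j, (U j • fderiv ℝ (fun y => u t y j) x + U j • fderiv ℝ (fun y => u t y j) x)) x := by
    refine HasFDerivAt.fun_sum fun j _ => ?_
    have h2 : (fun y => u t y j ^ 2) = fun y => u t y j * u t y j := by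
      funext y; ring
    rw [h2]
    exact (huy j).fun_mul (huy j)
  have hU' : ∀ i, u t x i = U i := fun _ => rfl
  have hdρ' : ∀ i, fderiv ℝ (fun y => ρ t y) x (Pi.single i 1) = dρ i := fun _ => rfl
  have hdS' : ∀ i, fderiv ℝ (fun y => S t y) x (Pi.single i 1) = dS i := fun _ => rfl
  have hdU' : ∀ i j, fderiv ℝ (fun y => u t y j) x (Pi.single i 1) = dU i j :=
    fun _ _ => rfl
  have space : ∀ i, fderiv ℝ (fun y =>
      ((1/2) * ρ t y * (∑ j, (u t y j) ^ 2) * f (S t y) - h (S t y))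
        * u t y i + h (S t y) * u t y i) x (Pi.single i 1)
      = (1/2) * (dρ i * Q * F * U i + R * (∑ j, 2 * U j * dU i j) * F * U i
          + R * Q * F' * dS i * U i + R * Q * F * dU i i) := by
    intro i
    have hfun : (fun y =>
        ((1/2) * ρ t y * (∑ j, (u t y j) ^ 2) * f (S t y) - h (S t y))
          * u t y i + h (S t y) * u t y i)
        = fun y => (1/2) * ρ t y * (∑ j, (u t y j) ^ 2) * f (S t y) * u t y i := by
      funext y; ring
    rw [hfun]
    have hprod := ((((hρy.const_mul ((1:ℝ)/2)).fun_mul hqy).fun_mul hfSy).fun_mul (huy i))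
    rw [hprod.fderiv]
    simp only [ContinuousLinearMap.add_apply, ContinuousLinearMap.smul_apply,
      ContinuousLinearMap.coe_smul', Pi.smul_apply, ContinuousLinearMap.coe_sum',
      Finset.sum_apply, smul_eq_mul, hdρ', hdS', hdU', hU']
    rw [show (∑ j, 2 * U j * dU i j) = ∑ j, (U j * dU i j + U j * dU i j) from
      Finset.sum_congr rfl fun j _ => by ring]
    simp only [show (∑ j : Fin n, U j ^ 2) = Q from hQdef.symm]
    ring
  -- expanded continuity equation
  have hcont' : ρt = -∑ j, (R * dU j j + U j * dρ j) := by
    rw [hρtdef, hcont t x]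
    congr 1
    refine Finset.sum_congr rfl fun j _ => ?_
    rw [(hρy.fun_mul (huy j)).fderiv]
    simp only [ContinuousLinearMap.add_apply, ContinuousLinearMap.smul_apply,
      smul_eq_mul, hdρ', hdU', hU']
    rfl
  -- put everything together
  rw [hT.deriv, Finset.sum_congr rfl fun i _ => space i]
  have hmom' : ∀ j, ut j = -(∑ k, U k * dU k j) - R⁻¹ * P' * dS j := fun j => hmom t x j
  have hent' : St = -∑ j, U j * dS j := hent t x
  rw [hent', hhf (S t x)]
  rw [show (∑ j, 2 * U j * ut j)
      = ∑ j, 2 * U j * (-(∑ k, U k * dU k j) - R⁻¹ * P' * dS j) from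
    Finset.sum_congr rfl fun j _ => by rw [hmom' j]]
  rw [hcont']
  exact alg n R Q F F' P' (ne_of_gt (hρpos t x)) U dρ dS dU
end
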